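/- In the two-variable model above, if additionally f is C¹ and not constant on any nonempty open interval, and f′ has at most countably many zeros, then E[|∂² log p/∂x₁∂x₂ (X₁, X₂)|] = E[|f′(X₁)|]/σ₂² > 0, where (X₁, X₂) has density p. -/

import Mathlib

/-!
Away from the normalising constants, `log p(x₁, x₂) = -(x₂ - f x₁)² / (2σ₂²) + (a function of x₁)`,
so `∂²/∂x₁∂x₂ log p = f′(x₁) / σ₂²` pointwise and the first identity holds under the integral.
For positivity, the density is everywhere positive, so every null set of the law of `(X₁, X₂)` is
Lebesgue-null; the integrand vanishes only on `{f′ = 0} × ℝ`, which is Lebesgue-null because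
`{f′ = 0}` is countable.
-/

open Real MeasureTheory

/-- Joint density of the two-variable additive Gaussian model
`X₁ ~ N(0, σ₁²)`, `X₂ = f(X₁) + ε`, `ε ~ N(0, σ₂²)`. -/
noncomputable def twoVarDensity (f : ℝ → ℝ) (σ₁ σ₂ : ℝ) (x₁ x₂ : ℝ) : ℝ :=
  (Real.sqrt (2 * π * σ₁ ^ 2))⁻¹ * Real.exp (-(x₁ ^ 2) / (2 * σ₁ ^ 2)) *
    ((Real.sqrt (2 * π * σ₂ ^ 2))⁻¹ * Real.exp (-((x₂ - f x₁) ^ 2) / (2 * σ₂ ^ 2)))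

theorem lintegral_withDensity_pos {α : Type*} [MeasurableSpace α] {μ : Measure α} [NeZero μ]
    {ρ g : α → ENNReal} (hρ : AEMeasurable ρ μ) (hρ_ne : ∀ᵐ x ∂μ, ρ x ≠ 0)
    (hg : AEMeasurable g (μ.withDensity ρ)) (hg_ne : ∀ᵐ x ∂μ, g x ≠ 0) :
    0 < ∫⁻ x, g x ∂μ.withDensity ρ := by
  refine pos_iff_ne_zero.2 fun h => NeZero.ne μ ?_
  have hg_zero : g =ᵐ[μ] 0 :=
    withDensity_absolutelyContinuous' hρ hρ_ne ((lintegral_eq_zero_iff' hg).1 h)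
  rw [← ae_eq_bot, ← Filter.eventually_false_iff_eq_bot]
  filter_upwards [hg_zero, hg_ne] with x hx hx' using hx' hx

namespace twoVarDensity

variable {f : ℝ → ℝ} {σ₁ σ₂ : ℝ}

theorem pos (hσ₁ : σ₁ ≠ 0) (hσ₂ : σ₂ ≠ 0) (a b : ℝ) : 0 < twoVarDensity f σ₁ σ₂ a b := by
  unfold twoVarDensity
  positivity

theorem continuous (hf : Continuous f) :
    Continuous fun z : ℝ × ℝ => twoVarDensity f σ₁ σ₂ z.1 z.2 := by
  unfold twoVarDensity
  fun_prop

theorem hasDerivAt_log_right (hσ₁ : σ₁ ≠ 0) (hσ₂ : σ₂ ≠ 0) (a b : ℝ) :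
    HasDerivAt (fun b => Real.log (twoVarDensity f σ₁ σ₂ a b)) ((f a - b) / σ₂ ^ 2) b := by
  set c := (√(2 * π * σ₁ ^ 2))⁻¹ * exp (-(a ^ 2) / (2 * σ₁ ^ 2)) * (√(2 * π * σ₂ ^ 2))⁻¹
  have hc : 0 < c := by positivity
  have hlog : (fun b => Real.log (twoVarDensity f σ₁ σ₂ a b)) =
      fun b => Real.log c + -((b - f a) ^ 2) / (2 * σ₂ ^ 2) := by
    funext b
    rw [twoVarDensity, ← mul_assoc, Real.log_mul hc.ne' (exp_ne_zero _), Real.log_exp]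
  rw [hlog]
  refine ((((hasDerivAt_id' b).sub_const (f a)).pow 2).neg.div_const (2 * σ₂ ^ 2)
    |>.const_add (Real.log c)).congr_deriv ?_
  field_simp
  ring

theorem deriv_log_mixed (hf : Differentiable ℝ f) (hσ₁ : σ₁ ≠ 0) (hσ₂ : σ₂ ≠ 0) (a b : ℝ) :
    deriv (fun a => deriv (fun b => Real.log (twoVarDensity f σ₁ σ₂ a b)) b) a =
      deriv f a / σ₂ ^ 2 := by
  have hinner : (fun a => deriv (fun b => Real.log (twoVarDensity f σ₁ σ₂ a b)) b) =
      fun a => (f a - b) / σ₂ ^ 2 :=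
    funext fun a => (hasDerivAt_log_right hσ₁ hσ₂ a b).deriv
  rw [hinner]
  exact (((hf a).hasDerivAt.sub_const b).div_const _).deriv

end twoVarDensity

theorem two_var_model_edge_detection_general
    (f : ℝ → ℝ) (hf : ContDiff ℝ 1 f) (σ₁ σ₂ : ℝ) (hσ₁ : 0 < σ₁) (hσ₂ : 0 < σ₂)
    -- f′ has at most countably many zeros
    (hzeros : {x : ℝ | deriv f x = 0}.Countable)
    -- P is the law of (X₁, X₂), with joint density p
    (P : Measure (ℝ × ℝ))
    (hP : P = (volume : Measure (ℝ × ℝ)).withDensity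
      (fun z => ENNReal.ofReal (twoVarDensity f σ₁ σ₂ z.1 z.2))) :
    (∫⁻ z, ENNReal.ofReal
        |deriv (fun a : ℝ => deriv (fun b : ℝ =>
          Real.log (twoVarDensity f σ₁ σ₂ a b)) z.2) z.1| ∂P) =
      (∫⁻ z, ENNReal.ofReal (|deriv f z.1| / σ₂ ^ 2) ∂P) ∧
    0 < ∫⁻ z, ENNReal.ofReal (|deriv f z.1| / σ₂ ^ 2) ∂P := by
  refine ⟨lintegral_congr fun z => ?_, ?_⟩
  · rw [twoVarDensity.deriv_log_mixed (hf.differentiable one_ne_zero) hσ₁.ne' hσ₂.ne',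
      abs_div, abs_of_pos (pow_pos hσ₂ 2)]
  have hderiv_ne : ∀ᵐ z : ℝ × ℝ, deriv f z.1 ≠ 0 :=
    Measure.quasiMeasurePreserving_fst.ae (hzeros.ae_notMem volume)
  subst hP
  refine lintegral_withDensity_pos
    ((twoVarDensity.continuous hf.continuous).measurable.ennreal_ofReal.aemeasurable)
    (ae_of_all _ fun z => (ENNReal.ofReal_pos.2 (twoVarDensity.pos hσ₁.ne' hσ₂.ne' _ _)).ne')
    (((measurable_deriv f).comp measurable_fst).abs.div_const _).ennreal_ofReal.aemeasurable
    (hderiv_ne.mono fun z hz => (ENNReal.ofReal_pos.2 (by positivity)).ne')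

theorem two_var_model_edge_detection
    (f : ℝ → ℝ) (hf : ContDiff ℝ 1 f) (σ₁ σ₂ : ℝ) (hσ₁ : 0 < σ₁) (hσ₂ : 0 < σ₂)
    -- f is not constant on any nonempty open interval
    (hnc : ∀ a b : ℝ, a < b → ¬ ∃ c : ℝ, ∀ x ∈ Set.Ioo a b, f x = c)
    -- f′ has at most countably many zeros
    (hzeros : {x : ℝ | deriv f x = 0}.Countable)
    -- P is the law of (X₁, X₂), with joint density p
    (P : Measure (ℝ × ℝ))
    (hP : P = (volume : Measure (ℝ × ℝ)).withDensity
      (fun z => ENNReal.ofReal (twoVarDensity f σ₁ σ₂ z.1 z.2))) :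
    (∫⁻ z, ENNReal.ofReal
        |deriv (fun a : ℝ => deriv (fun b : ℝ =>
          Real.log (twoVarDensity f σ₁ σ₂ a b)) z.2) z.1| ∂P) =
      (∫⁻ z, ENNReal.ofReal (|deriv f z.1| / σ₂ ^ 2) ∂P) ∧
    0 < ∫⁻ z, ENNReal.ofReal (|deriv f z.1| / σ₂ ^ 2) ∂P :=
  two_var_model_edge_detection_general f hf σ₁ σ₂ hσ₁ hσ₂ hzeros P hP
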